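/- Let I be a finite set of data vectors of arity k and dimension d, and let y ∈ I. Then y is reversible in Perm(I) if and only if P(y) is reversible in P(I), i.e. −y ∈ Σ_ℕ(Perm(I)) if and only if −P(y) ∈ Σ_ℕ(P(I)). -/

import Mathlib

/-- A data vector of dimension `d`: a finitely supported function from finite
subsets of the data domain `ℕ` (the `k`-element ones being relevant) to
vectors in `ℤ^d`. -/
abbrev HG (d : ℕ) := (Finset ℕ) →₀ (Fin d → ℤ)

/-- `v` is a data vector of arity `k`: it is supported on `k`-element sets. -/
def IsHG (k : ℕ) {d : ℕ} (v : HG d) : Prop := ∀ e ∈ v.support, e.card = k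

/-- The action of a data permutation `π : ℕ ≃ ℕ` on a data vector:
`(v ∘ π)({α₁, …, α_k}) = v({π α₁, …, π α_k})`. -/
def permDV {d : ℕ} (π : ℕ ≃ ℕ) (v : HG d) : HG d :=
  Finsupp.equivMapDomain π.symm.finsetCongr v

/-- `Perm(I)`: the closure of the set `I` of data vectors under data
permutations. -/
def Perm {d : ℕ} (I : Set (HG d)) : Set (HG d) :=
  {w | ∃ v ∈ I, ∃ π : ℕ ≃ ℕ, w = permDV π v}

/-- `Σ_ℕ(U)` for a set `U` of data vectors: all finite sums of members of `U`
with nonnegative-integer coefficients. -/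
def NsumDV {d : ℕ} (U : Set (HG d)) : Set (HG d) :=
  {x | ∃ (l : ℕ) (c : Fin l → ℕ) (u : Fin l → HG d),
      (∀ i, u i ∈ U) ∧ x = ∑ i, c i • u i}

/-- `Σ_ℕ(U)` for a set `U` of vectors in `ℤ^d`: all finite sums of members of
`U` with nonnegative-integer coefficients. -/
def NsumV {d : ℕ} (U : Set (Fin d → ℤ)) : Set (Fin d → ℤ) :=
  {x | ∃ (l : ℕ) (c : Fin l → ℕ) (u : Fin l → (Fin d → ℤ)),
      (∀ i, u i ∈ U) ∧ x = ∑ i, c i • u i}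

/-- The data projection `P(v) = Σ_x v(x) ∈ ℤ^d` of a data vector `v`. -/
def proj {d : ℕ} (v : HG d) : Fin d → ℤ := ∑ e ∈ v.support, v e

/-!
The projection `P` is additive and invariant under data permutations, which gives the forward
direction. Conversely, if `-P(y) = Σ nᵢ P(vᵢ)` with `vᵢ ∈ I`, then `u = y + Σ nᵢ vᵢ` has
projection zero and is supported on `k`-subsets of a finite set `A` of data values. Summing
`u ∘ σ` over all permutations `σ` of `A` gives zero: its value at a `k`-subset `e ⊆ A` does not
depend on `e`, since the permutations of `A` act transitively on its `k`-subsets, and the sum of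
these values over all `k`-subsets is `(#A)! • P(u) = 0`; `ℤ^d` is torsion-free. As the identity is
among the `σ`, this writes `-y` as a sum of elements of `Perm(I)`.
-/

open scoped Pointwise

section GroupAction

variable {G X M : Type*} [Group G] [MulAction G X] [AddCommMonoid M] {T : Finset X}

theorem Finset.sum_comp_smul_of_mapsTo (hT : ∀ g : G, ∀ x ∈ T, g • x ∈ T) (f : X → M) (g : G) :
    ∑ x ∈ T, f (g • x) = ∑ x ∈ T, f x :=
  Finset.sum_nbij' (g • ·) (g⁻¹ • ·) (hT g) (hT g⁻¹) (fun x _ => inv_smul_smul g x)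
    (fun x _ => smul_inv_smul g x) (fun _ _ => rfl)

theorem sum_smul_eq_zero_of_transitive [Fintype G] [IsAddTorsionFree M]
    (hT : ∀ g : G, ∀ x ∈ T, g • x ∈ T) (htrans : ∀ x ∈ T, ∀ y ∈ T, ∃ g : G, g • x = y)
    {f : X → M} (hf : ∀ x ∉ T, f x = 0) (hsum : ∑ x ∈ T, f x = 0) (x : X) :
    ∑ g : G, f (g • x) = 0 := by
  by_cases hx : x ∈ T
  swap
  · exact Finset.sum_eq_zero fun g _ => hf _ fun hgx => hx (by simpa using hT g⁻¹ _ hgx)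
  have hconst : ∀ y ∈ T, ∑ g : G, f (g • y) = ∑ g : G, f (g • x) := by
    intro y hy
    obtain ⟨h, rfl⟩ := htrans x hx y hy
    simp only [smul_smul]
    exact Fintype.sum_equiv (Equiv.mulRight h) _ _ fun _ => rfl
  have htotal : T.card • ∑ g : G, f (g • x) = 0 :=
    calc T.card • ∑ g : G, f (g • x) = ∑ y ∈ T, ∑ g : G, f (g • y) := by
          rw [Finset.sum_congr rfl hconst, Finset.sum_const]
      _ = ∑ g : G, ∑ y ∈ T, f y := by
          rw [Finset.sum_comm]
          exact Finset.sum_congr rfl fun g _ => Finset.sum_comp_smul_of_mapsTo hT f g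
      _ = 0 := by simp [hsum]
  exact (nsmul_eq_zero_iff_right (Finset.card_ne_zero_of_mem hx)).mp htotal

end GroupAction

theorem exists_fin_sum_nsmul_iff_mem_span {M : Type*} [AddCommMonoid M] {U : Set M} {x : M} :
    (∃ (l : ℕ) (c : Fin l → ℕ) (u : Fin l → M), (∀ i, u i ∈ U) ∧ x = ∑ i, c i • u i) ↔
      x ∈ Submodule.span ℕ U := by
  rw [Submodule.mem_span_set']
  constructor
  · rintro ⟨l, c, u, hu, rfl⟩
    exact ⟨l, c, fun i => ⟨u i, hu i⟩, rfl⟩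
  · rintro ⟨l, c, u, rfl⟩
    exact ⟨l, c, fun i => u i, fun i => (u i).2, rfl⟩

theorem mem_NsumDV_iff {d : ℕ} {U : Set (HG d)} {x : HG d} :
    x ∈ NsumDV U ↔ x ∈ Submodule.span ℕ U :=
  exists_fin_sum_nsmul_iff_mem_span

theorem mem_NsumV_iff {d : ℕ} {U : Set (Fin d → ℤ)} {x : Fin d → ℤ} :
    x ∈ NsumV U ↔ x ∈ Submodule.span ℕ U :=
  exists_fin_sum_nsmul_iff_mem_span

section DataVector

variable {d k : ℕ}

noncomputable def projₗ (d : ℕ) : HG d →ₗ[ℕ] (Fin d → ℤ) :=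
  Finsupp.lsum ℕ fun _ => LinearMap.id

theorem proj_add (v w : HG d) : proj (v + w) = proj v + proj w := map_add (projₗ d) v w

theorem proj_neg (v : HG d) : proj (-v) = -proj v := map_neg (projₗ d) v

theorem proj_permDV (π : ℕ ≃ ℕ) (v : HG d) : proj (permDV π v) = proj v :=
  Finsupp.sum_equivMapDomain _ v fun _ x => x

theorem permDV_apply (π : Equiv.Perm ℕ) (v : HG d) (e : Finset ℕ) :
    permDV π v e = v (π • e) := by
  simp [permDV, Finset.smul_finset_def, Finset.map_eq_image]

theorem permDV_one (v : HG d) : permDV 1 v = v := by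
  ext e
  simp [permDV_apply]

theorem permDV_add (π : ℕ ≃ ℕ) (v w : HG d) : permDV π (v + w) = permDV π v + permDV π w :=
  map_add (Finsupp.domLCongr (R := ℕ) π.symm.finsetCongr) v w

theorem permDV_mem_span_Perm {I : Set (HG d)} {v : HG d} (hv : v ∈ Submodule.span ℕ I)
    (π : ℕ ≃ ℕ) : permDV π v ∈ Submodule.span ℕ (Perm I) := by
  have h := Submodule.mem_map_of_mem
    (f := (Finsupp.domLCongr (R := ℕ) π.symm.finsetCongr : HG d ≃ₗ[ℕ] HG d).toLinearMap) hv
  rw [Submodule.map_span] at h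
  refine Submodule.span_mono ?_ h
  rintro _ ⟨w, hw, rfl⟩
  exact ⟨w, hw, π, rfl⟩

theorem proj_mem_span_image_of_mem_span_Perm {I : Set (HG d)} {v : HG d}
    (hv : v ∈ Submodule.span ℕ (Perm I)) : proj v ∈ Submodule.span ℕ (proj '' I) := by
  have h := Submodule.mem_map_of_mem (f := projₗ d) hv
  rw [Submodule.map_span] at h
  refine Submodule.span_mono ?_ h
  rintro _ ⟨_, ⟨w, hw, π, rfl⟩, rfl⟩
  exact ⟨w, hw, (proj_permDV π w).symm⟩

theorem exists_mem_span_proj_eq {I : Set (HG d)} {x : Fin d → ℤ}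
    (hx : x ∈ Submodule.span ℕ (proj '' I)) : ∃ w ∈ Submodule.span ℕ I, proj w = x := by
  rw [show proj '' I = projₗ d '' I from rfl, ← Submodule.map_span] at hx
  exact hx

theorem IsHG.of_mem_span {I : Set (HG d)} (hI : ∀ v ∈ I, IsHG k v) {w : HG d}
    (hw : w ∈ Submodule.span ℕ I) : IsHG k w := by
  have hle : Submodule.span ℕ I ≤ Finsupp.supported (Fin d → ℤ) ℕ {e | e.card = k} :=
    Submodule.span_le.mpr fun v hv => (Finsupp.mem_supported _ v).mpr (hI v hv)
  exact (Finsupp.mem_supported _ w).mp (hle hw)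

theorem IsHG.mem_powersetCard_sup_support {u : HG d} (hu : IsHG k u) :
    ∀ e ∈ u.support, e ∈ (u.support.sup id).powersetCard k := fun e he =>
  Finset.mem_powersetCard.mpr ⟨Finset.le_sup (f := id) he, hu e he⟩

end DataVector

section Symmetrisation

variable {d k : ℕ} {A : Finset ℕ}

theorem Finset.map_subtype_perm_smul {α : Type*} [DecidableEq α] {p : α → Prop}
    [DecidablePred p] (σ : Equiv.Perm (Subtype p)) (s : Finset (Subtype p)) :
    (σ • s).map (Function.Embedding.subtype p) =
      Equiv.Perm.ofSubtype σ • s.map (Function.Embedding.subtype p) := by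
  simp only [Finset.smul_finset_def, Finset.map_eq_image, Finset.image_image]
  congr 1
  funext x
  simp [Equiv.Perm.ofSubtype_apply_coe]

theorem ofSubtype_smul_mem_powersetCard (σ : Equiv.Perm A) {e : Finset ℕ}
    (he : e ∈ A.powersetCard k) : Equiv.Perm.ofSubtype σ • e ∈ A.powersetCard k := by
  rw [Finset.mem_powersetCard] at he ⊢
  refine ⟨?_, by rw [Finset.card_smul_finset, he.2]⟩
  rw [← Finset.subtype_map_of_mem he.1, ← Finset.map_subtype_perm_smul]
  exact Finset.map_subtype_subset _

theorem exists_ofSubtype_smul_eq {e e' : Finset ℕ} (he : e ∈ A.powersetCard k)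
    (he' : e' ∈ A.powersetCard k) : ∃ σ : Equiv.Perm A, Equiv.Perm.ofSubtype σ • e = e' := by
  rw [Finset.mem_powersetCard] at he he'
  have hsubtype : ∀ {f : Finset ℕ}, f ⊆ A → f.card = k →
      f.subtype (· ∈ A) ∈ Set.powersetCard A k := fun hf hfk => by
    rw [Set.powersetCard.mem_iff, Finset.card_subtype, Finset.filter_true_of_mem hf, hfk]
  have := Set.powersetCard.isPretransitive (α := A) (n := k)
  obtain ⟨σ, hσ⟩ := MulAction.exists_smul_eq (Equiv.Perm A)
    (⟨_, hsubtype he.1 he.2⟩ : Set.powersetCard A k) ⟨_, hsubtype he'.1 he'.2⟩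
  refine ⟨σ, ?_⟩
  rw [← Finset.subtype_map_of_mem he.1, ← Finset.subtype_map_of_mem he'.1,
    ← Finset.map_subtype_perm_smul]
  exact congrArg
    (fun s : Set.powersetCard A k => (s : Finset A).map (Function.Embedding.subtype _)) hσ

theorem sum_permDV_ofSubtype_eq_zero {u : HG d} (hu : ∀ e ∈ u.support, e ∈ A.powersetCard k)
    (hP : proj u = 0) : ∑ σ : Equiv.Perm A, permDV (Equiv.Perm.ofSubtype σ) u = 0 := by
  let : MulAction (Equiv.Perm A) (Finset ℕ) := MulAction.compHom _ Equiv.Perm.ofSubtype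
  have hsum : ∑ e ∈ A.powersetCard k, u e = 0 := by
    rw [← hP, proj]
    exact (Finset.sum_subset hu fun e _ he => Finsupp.notMem_support_iff.mp he).symm
  ext e : 1
  rw [Finsupp.finsetSum_apply, Finsupp.coe_zero, Pi.zero_apply]
  simp only [permDV_apply]
  exact sum_smul_eq_zero_of_transitive (fun σ _ he => ofSubtype_smul_mem_powersetCard σ he)
    (fun _ he _ he' => exists_ofSubtype_smul_eq he he')
    (fun e he => Finsupp.notMem_support_iff.mp (mt (hu e) he)) hsum e

theorem neg_mem_span_Perm_of_sum_permDV_eq_zero {I : Set (HG d)} {y w : HG d} (hy : y ∈ I)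
    (hw : w ∈ Submodule.span ℕ I)
    (h : ∑ σ : Equiv.Perm A, permDV (Equiv.Perm.ofSubtype σ) (y + w) = 0) :
    -y ∈ Submodule.span ℕ (Perm I) := by
  have hsplit : ∑ σ : Equiv.Perm A, permDV (Equiv.Perm.ofSubtype σ) (y + w) =
      y + (∑ σ ∈ (Finset.univ : Finset (Equiv.Perm A)).erase 1,
          permDV (Equiv.Perm.ofSubtype σ) y +
        ∑ σ : Equiv.Perm A, permDV (Equiv.Perm.ofSubtype σ) w) := by
    rw [Finset.sum_congr rfl fun σ _ => permDV_add _ y w, Finset.sum_add_distrib,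
      ← Finset.add_sum_erase _ _ (Finset.mem_univ 1),
      map_one (Equiv.Perm.ofSubtype : Equiv.Perm A →* Equiv.Perm ℕ), permDV_one, add_assoc]
  rw [neg_eq_of_add_eq_zero_right (hsplit ▸ h)]
  exact add_mem (Submodule.sum_mem _ fun σ _ => Submodule.subset_span ⟨y, hy, _, rfl⟩)
    (Submodule.sum_mem _ fun σ _ => permDV_mem_span_Perm hw _)

end Symmetrisation

theorem reversibility_characterisation_general
    (k d : ℕ)
    (I : Set (HG d)) (hI : ∀ v ∈ I, IsHG k v)
    (y : HG d) (hy : y ∈ I) :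
    -y ∈ NsumDV (Perm I) ↔ -(proj y) ∈ NsumV (proj '' I) := by
  rw [mem_NsumDV_iff, mem_NsumV_iff, ← proj_neg]
  refine ⟨proj_mem_span_image_of_mem_span_Perm, fun h => ?_⟩
  obtain ⟨w, hw, hpw⟩ := exists_mem_span_proj_eq h
  have hu : IsHG k (y + w) := IsHG.of_mem_span hI (add_mem (Submodule.subset_span hy) hw)
  have hP : proj (y + w) = 0 := by rw [proj_add, hpw, proj_neg, add_neg_cancel]
  exact neg_mem_span_Perm_of_sum_permDV_eq_zero hy hw
    (sum_permDV_ofSubtype_eq_zero hu.mem_powersetCard_sup_support hP)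

/-- **Lemma (projection preserves reversibility).**
Let `I` be a finite set of data vectors of arity `k` and dimension `d`, and
let `y ∈ I`.  Then `y` is reversible in `Perm(I)` iff `P(y)` is reversible in
`P(I)`, i.e. `−y ∈ Σ_ℕ(Perm(I))` iff `−P(y) ∈ Σ_ℕ(P(I))`. -/
theorem reversibility_characterisation
    (k d : ℕ) (hk : 1 ≤ k) (hd : 1 ≤ d)
    (I : Set (HG d)) (hIfin : I.Finite) (hI : ∀ v ∈ I, IsHG k v)
    (y : HG d) (hy : y ∈ I) :
    -y ∈ NsumDV (Perm I) ↔ -(proj y) ∈ NsumV (proj '' I) :=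
  reversibility_characterisation_general k d I hI y hy
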